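/- arXiv:1705.06517 — 4 statements merged into one kernel-verified Lean document; each statement's English description precedes it below -/
import Mathlib

section
/- The map from double cosets H\S_{2n}/H to n×n matrices, sending the double coset of u to the matrix M(u) with entries M(u)_{ij} = #({2i-1, 2i} ∩ u({2j-1, 2j})), is a well-defined injection whose image is exactly the set of n×n matrices with non-negative integer entries all of whose row sums and column sums equal 2. -/
/-- The equivalence `Fin n × Fin 2 ≃ Fin (2*n)`, `(a, b) ↦ 2a + b`. -/
def pairFinEquiv (n : ℕ) : Fin n × Fin 2 ≃ Fin (2 * n) where
  toFun p := ⟨2 * p.1.1 + p.2.1, by have h1 := p.1.2; have h2 := p.2.2; omega⟩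
  invFun i := (⟨i.1 / 2, by have := i.2; omega⟩, ⟨i.1 % 2, by omega⟩)
  left_inv := by
    rintro ⟨⟨a, ha⟩, ⟨b, hb⟩⟩
    simp only [Prod.mk.injEq]
    constructor <;> apply Fin.ext <;> simp <;> omega
  right_inv := by
    rintro ⟨i, hi⟩
    apply Fin.ext
    simp
    omega

/-- The doubling map `w ↦ w̃`, sending a permutation of `{0, …, n-1}` to the permutation of
`{0, …, 2n-1}` with `w̃(2i) = 2w(i)` and `w̃(2i+1) = 2w(i)+1` (the zero-based version of
`w̃(2i) = 2w(i)`, `w̃(2i-1) = 2w(i)-1`). -/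
def double {n : ℕ} (w : Equiv.Perm (Fin n)) : Equiv.Perm (Fin (2 * n)) :=
  (pairFinEquiv n).permCongr (Equiv.prodCongr w (Equiv.refl (Fin 2)))

/-- The number of inversions of a permutation, i.e. its Coxeter length. -/
noncomputable def invLength {n : ℕ} (u : Equiv.Perm (Fin n)) : ℕ :=
  Set.ncard { p : Fin n × Fin n | p.1 < p.2 ∧ u p.2 < u p.1 }

/-- Bruhat order on the symmetric group: the reflexive-transitive closure of the relation
`a → a * t` where `t` is a transposition and `ℓ(a * t) > ℓ(a)`. -/
def BruhatLE {n : ℕ} (x w : Equiv.Perm (Fin n)) : Prop :=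
  Relation.ReflTransGen
    (fun a b => (∃ i j : Fin n, b = a * Equiv.swap i j) ∧ invLength a < invLength b) x w

/-- The subgroup `H` of `S_{2n}` of permutations preserving each pair `{2i, 2i+1}`. -/
def pairSubgroup (n : ℕ) : Subgroup (Equiv.Perm (Fin (2 * n))) where
  carrier := { u | ∀ i, (u i).1 / 2 = i.1 / 2 }
  one_mem' := by intro i; rfl
  mul_mem' := by
    intro a b ha hb i
    rw [Equiv.Perm.mul_apply, ha, hb]
  inv_mem' := by
    intro a ha i
    have h := ha (a⁻¹ i)
    rw [← Equiv.Perm.mul_apply, mul_inv_cancel, Equiv.Perm.one_apply] at h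
    omega

/-- The subgroup `K` of `S_{2n}` of parity-preserving permutations. -/
def paritySubgroup (n : ℕ) : Subgroup (Equiv.Perm (Fin (2 * n))) where
  carrier := { u | ∀ i, (u i).1 % 2 = i.1 % 2 }
  one_mem' := by intro i; rfl
  mul_mem' := by
    intro a b ha hb i
    rw [Equiv.Perm.mul_apply, ha, hb]
  inv_mem' := by
    intro a ha i
    have h := ha (a⁻¹ i)
    rw [← Equiv.Perm.mul_apply, mul_inv_cancel, Equiv.Perm.one_apply] at h
    omega

/-- A permutation of `{0,…,2n-1}` is bi-`H`-reduced if it is increasing on each pair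
`{2i, 2i+1}` and so is its inverse. -/
def BiReduced {n : ℕ} (v : Equiv.Perm (Fin (2 * n))) : Prop :=
  ∀ i : Fin n,
    v ⟨2 * i.1, by have := i.2; omega⟩ < v ⟨2 * i.1 + 1, by have := i.2; omega⟩ ∧
    v⁻¹ ⟨2 * i.1, by have := i.2; omega⟩ < v⁻¹ ⟨2 * i.1 + 1, by have := i.2; omega⟩

/-- Membership of `v` in the double coset `H x H` of `H = pairSubgroup n`. -/
def InPairDoubleCoset {n : ℕ} (x v : Equiv.Perm (Fin (2 * n))) : Prop :=
  ∃ h₁ ∈ pairSubgroup n, ∃ h₂ ∈ pairSubgroup n, v = h₁ * x * h₂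

/-- The matrix attached to a double coset `HuH`: the `(i,j)` entry is
`#({2i, 2i+1} ∩ u({2j, 2j+1}))`. -/
noncomputable def cosetMatrix {n : ℕ} (u : Equiv.Perm (Fin (2 * n))) :
    Matrix (Fin n) (Fin n) ℕ :=
  fun i j => Set.ncard { k : Fin (2 * n) | k.1 / 2 = j.1 ∧ (u k).1 / 2 = i.1 }

/-- The simple reflection `s_j = (j, j+1)` of `S_n` (zero-based). -/
def sRefl {n : ℕ} (j : {j : ℕ // j + 1 < n}) : Equiv.Perm (Fin n) :=
  Equiv.swap ⟨j.1, Nat.lt_of_succ_lt j.2⟩ ⟨j.1 + 1, j.2⟩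

/-- A Boolean permutation: a product of distinct simple reflections. -/
def BooleanPerm {n : ℕ} (w : Equiv.Perm (Fin n)) : Prop :=
  ∃ js : List {j : ℕ // j + 1 < n}, (js.map Subtype.val).Nodup ∧ w = (js.map sRefl).prod

/-- `w` avoids the pattern `(321)`. -/
def Avoids321 {n : ℕ} (w : Equiv.Perm (Fin n)) : Prop :=
  ¬ ∃ i j k : Fin n, i < j ∧ j < k ∧ w k < w j ∧ w j < w i

/-- `w` avoids the pattern `(3412)`. -/
def Avoids3412 {n : ℕ} (w : Equiv.Perm (Fin n)) : Prop :=
  ¬ ∃ i j k l : Fin n, i < j ∧ j < k ∧ k < l ∧ w k < w l ∧ w l < w i ∧ w i < w j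

/-- `w` avoids the pattern `(4231)`. -/
def Avoids4231 {n : ℕ} (w : Equiv.Perm (Fin n)) : Prop :=
  ¬ ∃ i j k l : Fin n, i < j ∧ j < k ∧ k < l ∧ w l < w j ∧ w j < w k ∧ w k < w i

/-!
The double coset `HuH` only remembers, for each `k`, the pair of blocks `(block k, block (u k))`,
and `M(u)` records the sizes of the fibres of `k ↦ (block k, block (u k))`. Two maps out of finite
sets with the same fibre sizes differ by a bijection of their domains. Applied to these pair maps,
this gives `u` and `v` in the same double coset when `M(u) = M(v)`. Applied to the projections of
`Σ (i, j), Fin (A i j)`, it gives a permutation with matrix `A` whenever the row and column sums of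
`A` equal the block sizes.
-/

open Finset Equiv

section FiberMatrix

variable {X Y B : Type*} [Fintype X] [Fintype Y] [DecidableEq B]

theorem exists_equiv_comp_eq_of_card_fiber_eq {f : X → B} {g : Y → B}
    (h : ∀ b, #{x | f x = b} = #{y | g y = b}) : ∃ e : X ≃ Y, ∀ x, g (e x) = f x :=
  ⟨ofFiberEquiv fun b => Fintype.equivOfCardEq (by simpa only [Fintype.card_subtype] using h b),
    ofFiberEquiv_map _⟩

theorem card_filter_comp_equiv (e : X ≃ Y) (P : Y → Prop) [DecidablePred P] :
    #{x | P (e x)} = #{y | P y} := by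
  simpa only [Fintype.card_subtype] using
    Fintype.card_congr (e.subtypeEquiv (p := fun x => P (e x)) fun _ => Iff.rfl)

theorem card_filter_sigma_fst {C : Type*} [Fintype C] (a : C → ℕ) (P : C → Prop)
    [DecidablePred P] : #{y : Σ c, Fin (a c) | P y.1} = ∑ c, if P c then a c else 0 := by
  rw [card_filter, Fintype.sum_sigma]
  simp [apply_ite]

def fiberMatrix (p : X → B) (u : Perm X) : Matrix B B ℕ :=
  fun i j => #{k | p k = j ∧ p (u k) = i}

variable (p : X → B)

theorem fiberMatrix_mul_mul (u : Perm X) {h₁ h₂ : Perm X} (hh₁ : ∀ k, p (h₁ k) = p k)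
    (hh₂ : ∀ k, p (h₂ k) = p k) : fiberMatrix p (h₁ * u * h₂) = fiberMatrix p u := by
  ext i j
  simp only [fiberMatrix, Perm.mul_apply, hh₁]
  simpa only [hh₂] using card_filter_comp_equiv h₂ fun k => p k = j ∧ p (u k) = i

theorem exists_mul_mul_of_fiberMatrix_eq {u v : Perm X}
    (h : fiberMatrix p u = fiberMatrix p v) :
    ∃ h₁ h₂ : Perm X, (∀ k, p (h₁ k) = p k) ∧ (∀ k, p (h₂ k) = p k) ∧ v = h₁ * u * h₂ := by
  obtain ⟨σ, hσ⟩ := exists_equiv_comp_eq_of_card_fiber_eq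
    (f := fun k => (p k, p (v k))) (g := fun k => (p k, p (u k))) fun ⟨j, i⟩ => by
      simpa [fiberMatrix, Prod.ext_iff] using congrFun (congrFun h.symm i) j
  refine ⟨v * σ⁻¹ * u⁻¹, σ, fun k => ?_, fun k => (Prod.ext_iff.1 (hσ k)).1, by group⟩
  simpa using (Prod.ext_iff.1 (hσ (σ⁻¹ (u⁻¹ k)))).2.symm

theorem sum_fiberMatrix_row [Fintype B] (u : Perm X) (i : B) :
    ∑ j, fiberMatrix p u i j = #{k | p k = i} := by
  rw [← card_filter_comp_equiv u fun k => p k = i,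
    card_eq_sum_card_fiberwise (f := p) (t := univ) fun _ _ => mem_coe.2 (mem_univ _)]
  simp only [fiberMatrix, filter_filter, and_comm]

theorem sum_fiberMatrix_col [Fintype B] (u : Perm X) (j : B) :
    ∑ i, fiberMatrix p u i j = #{k | p k = j} := by
  rw [card_eq_sum_card_fiberwise (f := fun k => p (u k)) (t := univ)
    fun _ _ => mem_coe.2 (mem_univ _)]
  simp only [fiberMatrix, filter_filter]

theorem exists_fiberMatrix_eq [Fintype B] (A : Matrix B B ℕ)
    (hrow : ∀ i, ∑ j, A i j = #{k | p k = i}) (hcol : ∀ j, ∑ i, A i j = #{k | p k = j}) :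
    ∃ u : Perm X, fiberMatrix p u = A := by
  obtain ⟨e₁, he₁⟩ := exists_equiv_comp_eq_of_card_fiber_eq (f := p)
    (g := fun y : Σ c : B × B, Fin (A c.1 c.2) => y.1.2) fun j => by
      rw [card_filter_sigma_fst (fun c : B × B => A c.1 c.2) fun c => c.2 = j, ← hcol]
      simp [Fintype.sum_prod_type]
  obtain ⟨e₂, he₂⟩ := exists_equiv_comp_eq_of_card_fiber_eq (f := p)
    (g := fun y : Σ c : B × B, Fin (A c.1 c.2) => y.1.1) fun i => by
      rw [card_filter_sigma_fst (fun c : B × B => A c.1 c.2) fun c => c.1 = i, ← hrow]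
      simp [Fintype.sum_prod_type]
  have he₂_symm : ∀ y, p (e₂.symm y) = y.1.1 := fun y => by rw [← he₂, apply_symm_apply]
  refine ⟨e₁.trans e₂.symm, funext₂ fun i j => ?_⟩
  simp only [fiberMatrix, trans_apply, he₂_symm]
  simp only [← he₁]
  rw [card_filter_comp_equiv e₁ fun y => y.1.2 = j ∧ y.1.1 = i,
    card_filter_sigma_fst (fun c : B × B => A c.1 c.2) fun c => c.2 = j ∧ c.1 = i]
  simp [Fintype.sum_prod_type, ite_and]

end FiberMatrix

section PairBlocks

def pairIndex (n : ℕ) (k : Fin (2 * n)) : Fin n :=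
  ⟨k / 2, by omega⟩

variable {n : ℕ}

theorem mem_pairSubgroup_iff {h : Perm (Fin (2 * n))} :
    h ∈ pairSubgroup n ↔ ∀ k, pairIndex n (h k) = pairIndex n k := by
  simp only [pairIndex, Fin.ext_iff]
  rfl

theorem cosetMatrix_eq_fiberMatrix (u : Perm (Fin (2 * n))) :
    cosetMatrix u = fiberMatrix (pairIndex n) u := by
  ext i j
  rw [cosetMatrix, fiberMatrix, ← Set.ncard_coe_finset]
  congr
  ext k
  simp [pairIndex, Fin.ext_iff]

theorem card_pairIndex_fiber (i : Fin n) : #{k | pairIndex n k = i} = 2 := by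
  rw [card_eq_two]
  refine ⟨⟨2 * i, by omega⟩, ⟨2 * i + 1, by omega⟩, by simp [Fin.ext_iff], ?_⟩
  ext k
  simp only [pairIndex, mem_filter, mem_univ, true_and, mem_insert, mem_singleton, Fin.ext_iff]
  omega

end PairBlocks

/-- The map `HuH ↦ M(u)` is a well-defined injection from `H\S_{2n}/H` whose image is the
set of `n × n` matrices with non-negative integer entries and all row and column sums `2`. -/
theorem stmt7 (n : ℕ) :
    (∀ u v : Equiv.Perm (Fin (2 * n)),
        InPairDoubleCoset u v ↔ cosetMatrix u = cosetMatrix v) ∧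
    (∀ A : Matrix (Fin n) (Fin n) ℕ,
        (∃ u : Equiv.Perm (Fin (2 * n)), cosetMatrix u = A) ↔
          (∀ i, ∑ j, A i j = 2) ∧ (∀ j, ∑ i, A i j = 2)) := by
  refine ⟨fun u v => ?_, fun A => ?_⟩
  · rw [cosetMatrix_eq_fiberMatrix, cosetMatrix_eq_fiberMatrix]
    constructor
    · rintro ⟨h₁, hh₁, h₂, hh₂, rfl⟩
      exact (fiberMatrix_mul_mul _ u (mem_pairSubgroup_iff.1 hh₁)
        (mem_pairSubgroup_iff.1 hh₂)).symm
    · intro h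
      obtain ⟨h₁, h₂, hh₁, hh₂, rfl⟩ := exists_mul_mul_of_fiberMatrix_eq _ h
      exact ⟨h₁, mem_pairSubgroup_iff.2 hh₁, h₂, mem_pairSubgroup_iff.2 hh₂, rfl⟩
  · simp only [cosetMatrix_eq_fiberMatrix]
    constructor
    · rintro ⟨u, rfl⟩
      simp only [sum_fiberMatrix_row, sum_fiberMatrix_col, card_pairIndex_fiber, implies_true,
        and_self]
    · rintro ⟨hrow, hcol⟩
      exact exists_fiberMatrix_eq _ A (by simpa only [card_pairIndex_fiber])
        (by simpa only [card_pairIndex_fiber])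
end

section
/- For any x ∈ S_{2n}, the sign character sgn is constant on K ∩ HxH, where H is the subgroup preserving each pair {2i-1,2i} and K is the subgroup preserving parity. -/
/-! Elements of `H` are involutions, so their sign is determined by their number of fixed points.
If `u` and `v = h₁ u h₂` lie in `K` with `h₁, h₂ ∈ H`, then `u h₂` maps the fixed points of `h₂`
bijectively onto those of `h₁`, since an element of `H` fixes a point iff it preserves its parity.
Hence `sign h₁ = sign h₂` and `sign v = sign u`. -/

namespace pairSubgroup

variable {n : ℕ} {h : Equiv.Perm (Fin (2 * n))}

theorem apply_eq_self_iff_mod_two (hh : h ∈ pairSubgroup n) (i : Fin (2 * n)) :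
    h i = i ↔ (h i).1 % 2 = i.1 % 2 := by
  have := hh i
  rw [Fin.ext_iff]
  omega

theorem sq_eq_one (hh : h ∈ pairSubgroup n) : h ^ 2 = 1 := by
  ext i
  have h₁ := hh i
  have h₂ := hh (h i)
  simp only [sq, Equiv.Perm.mul_apply, Equiv.Perm.one_apply]
  by_cases hfix : h i = i
  · rw [hfix, hfix]
  · have hne : (h (h i)).1 ≠ (h i).1 := fun e => hfix (h.injective (Fin.ext e))
    rw [Fin.ext_iff] at hfix
    omega

theorem apply_eq_self_iff_of_mul_mem_paritySubgroup {h₁ h₂ u : Equiv.Perm (Fin (2 * n))}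
    (hh₁ : h₁ ∈ pairSubgroup n) (hh₂ : h₂ ∈ pairSubgroup n) (hu : u ∈ paritySubgroup n)
    (hv : h₁ * u * h₂ ∈ paritySubgroup n) (i : Fin (2 * n)) :
    h₂ i = i ↔ h₁ ((u * h₂) i) = (u * h₂) i := by
  have hvi : (h₁ (u (h₂ i))).1 % 2 = i.1 % 2 := hv i
  have hui : (u (h₂ i)).1 % 2 = (h₂ i).1 % 2 := hu (h₂ i)
  rw [apply_eq_self_iff_mod_two hh₂, Equiv.Perm.mul_apply, apply_eq_self_iff_mod_two hh₁]
  omega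

theorem sign_eq_of_mul_mem_paritySubgroup {h₁ h₂ u : Equiv.Perm (Fin (2 * n))}
    (hh₁ : h₁ ∈ pairSubgroup n) (hh₂ : h₂ ∈ pairSubgroup n) (hu : u ∈ paritySubgroup n)
    (hv : h₁ * u * h₂ ∈ paritySubgroup n) :
    Equiv.Perm.sign h₁ = Equiv.Perm.sign h₂ := by
  have hcard : Fintype.card (Function.fixedPoints h₂) = Fintype.card (Function.fixedPoints h₁) :=
    Fintype.card_congr <| (u * h₂).subtypeEquiv
      (apply_eq_self_iff_of_mul_mem_paritySubgroup hh₁ hh₂ hu hv)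
  rw [Equiv.Perm.sign_of_pow_two_eq_one (sq_eq_one hh₁),
    Equiv.Perm.sign_of_pow_two_eq_one (sq_eq_one hh₂), hcard]

end pairSubgroup

/-- The sign character is constant on `K ∩ HxH`. -/
theorem stmt12 (n : ℕ) (x u v : Equiv.Perm (Fin (2 * n)))
    (hu : u ∈ paritySubgroup n) (hv : v ∈ paritySubgroup n)
    (hu' : InPairDoubleCoset x u) (hv' : InPairDoubleCoset x v) :
    Equiv.Perm.sign u = Equiv.Perm.sign v := by
  obtain ⟨a, ha, b, hb, rfl⟩ := hu'
  obtain ⟨c, hc, d, hd, rfl⟩ := hv'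
  have hcd : c * x * d = (c * a⁻¹) * (a * x * b) * (b⁻¹ * d) := by group
  have hsign := pairSubgroup.sign_eq_of_mul_mem_paritySubgroup
    (mul_mem hc (inv_mem ha)) (mul_mem (inv_mem hb) hd) hu (hcd ▸ hv)
  rw [hcd, Equiv.Perm.sign_mul (c * a⁻¹ * (a * x * b)), Equiv.Perm.sign_mul (c * a⁻¹), hsign,
    mul_right_comm, Int.units_mul_self, one_mul]
end

section
/- A permutation w ∈ S_n is a product of distinct simple reflections (i.e., a Coxeter element of a parabolic subgroup of S_n, also called a Boolean permutation) if and only if w avoids both patterns (321) and (3412). -/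
/-!
Induct on the smallest index `c` moved by `w`. If `w` fixes `0, …, c - 1`, moves `c` and avoids
`(321)` and `(3412)`, then `w c = c + 1` or `w (c + 1) = c`: otherwise the positions of the values
`c` and `c + 1` together with the positions `c`, `c + 1` carry a `(321)` or a `(3412)`. Hence
`w = s_c u` or `w = u s_c` with `u` fixing `0, …, c`, and multiplying such a `u` by `s_c` only
exchanges two values in a way that creates or destroys no pattern. Conversely, in a product of
distinct simple reflections the factor `s_c` of smallest index can be moved to one end, because
`s_{c+1}` occurs on at most one side of it.
-/

open Equiv

section BooleanPatterns

variable {n : ℕ}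

lemma sRefl_apply_val (t : {j : ℕ // j + 1 < n}) (i : Fin n) :
    (sRefl t i).1 = if i.1 = t.1 then t.1 + 1 else if i.1 = t.1 + 1 then t.1 else i.1 := by
  simp only [sRefl, swap_apply_def, Fin.ext_iff]
  split_ifs <;> simp_all

lemma sRefl_mul_self (t : {j : ℕ // j + 1 < n}) : sRefl t * sRefl t = 1 :=
  swap_mul_self _ _

lemma sRefl_inv (t : {j : ℕ // j + 1 < n}) : (sRefl t)⁻¹ = sRefl t :=
  swap_inv _ _

lemma sRefl_lt_sRefl_iff (t : {j : ℕ // j + 1 < n}) {x y : Fin n} (hx : t.1 < x.1)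
    (hy : t.1 < y.1) : sRefl t x < sRefl t y ↔ x < y := by
  rw [Fin.lt_def, Fin.lt_def, sRefl_apply_val, sRefl_apply_val]
  split_ifs <;> omega

lemma sRefl_commute {s t : {j : ℕ // j + 1 < n}} (h : s.1 + 2 ≤ t.1) :
    Commute (sRefl s) (sRefl t) := by
  ext i
  simp only [Perm.mul_apply, sRefl_apply_val]
  split_ifs <;> omega

lemma Avoids321.inv {w : Perm (Fin n)} (h : Avoids321 w) : Avoids321 w⁻¹ := by
  rintro ⟨i, j, k, hij, hjk, hkj, hji⟩
  exact h ⟨w⁻¹ k, w⁻¹ j, w⁻¹ i, hkj, hji, by simpa using hij, by simpa using hjk⟩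

lemma Avoids3412.inv {w : Perm (Fin n)} (h : Avoids3412 w) : Avoids3412 w⁻¹ := by
  rintro ⟨i, j, k, l, hij, hjk, hkl, hkl', hli, hij'⟩
  exact h ⟨w⁻¹ k, w⁻¹ l, w⁻¹ i, w⁻¹ j, hkl', hli, hij', by simpa using hij,
    by simpa using hjk, by simpa using hkl⟩

lemma avoids321_inv_iff {w : Perm (Fin n)} : Avoids321 w⁻¹ ↔ Avoids321 w :=
  ⟨fun h => inv_inv w ▸ h.inv, Avoids321.inv⟩

lemma avoids3412_inv_iff {w : Perm (Fin n)} : Avoids3412 w⁻¹ ↔ Avoids3412 w :=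
  ⟨fun h => inv_inv w ▸ h.inv, Avoids3412.inv⟩

lemma avoids321_one : Avoids321 (1 : Perm (Fin n)) := by
  rintro ⟨i, j, k, hij, -, -, hji⟩
  exact absurd hji (not_lt.2 hij.le)

lemma avoids3412_one : Avoids3412 (1 : Perm (Fin n)) := by
  rintro ⟨i, j, k, l, hij, hjk, hkl, -, hli, -⟩
  simp only [Perm.one_apply] at hli
  omega

def FixesBelow (c : ℕ) (w : Perm (Fin n)) : Prop :=
  ∀ i : Fin n, i.1 < c → w i = i

namespace FixesBelow

variable {c : ℕ} {w : Perm (Fin n)}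

lemma mono (h : FixesBelow c w) {d : ℕ} (hdc : d ≤ c) : FixesBelow d w :=
  fun i hi => h i (by omega)

lemma le_apply (h : FixesBelow c w) {k : Fin n} (hk : c ≤ k.1) : c ≤ (w k).1 := by
  by_contra hlt
  have : w k = k := w.injective (h (w k) (by omega))
  omega

lemma inv (h : FixesBelow c w) : FixesBelow c w⁻¹ := fun i hi => by
  rw [Perm.inv_eq_iff_eq, h i hi]

lemma eq_one (h : FixesBelow c w) (hn : n ≤ c) : w = 1 :=
  Perm.ext fun i => h i (by omega)

lemma succ (h : FixesBelow c w) (hc : c < n) (hfix : w ⟨c, hc⟩ = ⟨c, hc⟩) :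
    FixesBelow (c + 1) w := fun i hi => by
  rcases Nat.lt_or_ge i.1 c with hi' | hi'
  · exact h i hi'
  · rw [show i = ⟨c, hc⟩ from Fin.ext (by simp only; omega)]
    exact hfix

lemma lt_of_apply_lt (h : FixesBelow c w) (hc : ∀ i : Fin n, i.1 = c → (w i).1 ≤ c + 1)
    {i j k : Fin n} (hij : i < j) (hjk : j < k) (hj : w j < w i) (hk : w k < w i) :
    c < i.1 := by
  by_contra hi
  rcases Nat.lt_or_ge j.1 c with hjc | hjc
  · rw [h j hjc, h i (by omega)] at hj
    omega
  have hwj := h.le_apply hjc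
  have hwk := h.le_apply (k := k) (by omega)
  rcases Nat.lt_or_ge i.1 c with hic | hic
  · rw [h i hic] at hj
    omega
  have hwi := hc i (by omega)
  exact hjk.ne (w.injective (Fin.ext (by omega)))

lemma sRefl_mul (t : {j : ℕ // j + 1 < n}) (h : FixesBelow (t.1 + 1) w) :
    FixesBelow t.1 (sRefl t * w) := fun i hi => by
  ext
  rw [Perm.mul_apply, h i (by omega), sRefl_apply_val]
  split_ifs <;> omega

lemma sRefl_mul_of_apply_eq (t : {j : ℕ // j + 1 < n}) (h : FixesBelow t.1 w)
    (ht : w ⟨t.1, by omega⟩ = ⟨t.1 + 1, t.2⟩) : FixesBelow (t.1 + 1) (sRefl t * w) :=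
  fun i hi => by
  ext
  rw [Perm.mul_apply, sRefl_apply_val]
  rcases Nat.lt_or_ge i.1 t.1 with hi' | hi'
  · rw [h i hi']; split_ifs <;> omega
  · rw [show i = ⟨t.1, by omega⟩ from Fin.ext (by simp only; omega), ht]
    simp

lemma mul_sRefl_of_apply_eq (t : {j : ℕ // j + 1 < n}) (h : FixesBelow t.1 w)
    (ht : w ⟨t.1 + 1, t.2⟩ = ⟨t.1, by omega⟩) : FixesBelow (t.1 + 1) (w * sRefl t) := by
  have ht' : w⁻¹ ⟨t.1, by omega⟩ = ⟨t.1 + 1, t.2⟩ := by rw [Perm.inv_eq_iff_eq, ht]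
  simpa [mul_inv_rev, sRefl_inv] using (sRefl_mul_of_apply_eq t h.inv ht').inv

end FixesBelow

lemma fixesBelow_prod {c : ℕ} (js : List {j : ℕ // j + 1 < n}) (h : ∀ j ∈ js, c ≤ j.1) :
    FixesBelow c (js.map sRefl).prod := by
  induction js with
  | nil => exact fun i _ => rfl
  | cons t js ih =>
    intro i hi
    have ht := h t List.mem_cons_self
    rw [List.map_cons, List.prod_cons, Perm.mul_apply,
      ih (fun j hj => h j (List.mem_cons_of_mem _ hj)) i hi]
    ext
    rw [sRefl_apply_val]
    split_ifs <;> omega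

lemma Avoids321.of_lt_imp_lt {c : ℕ} {u v : Perm (Fin n)} (hu : Avoids321 u)
    (hv : FixesBelow c v) (hvc : ∀ i : Fin n, i.1 = c → (v i).1 ≤ c + 1)
    (hord : ∀ i k : Fin n, c < i.1 → c < k.1 → v i < v k → u i < u k) : Avoids321 v := by
  rintro ⟨i, j, k, hij, hjk, hkj, hji⟩
  have hi := hv.lt_of_apply_lt hvc hij hjk hji (hkj.trans hji)
  exact hu ⟨i, j, k, hij, hjk, hord _ _ (by omega) (by omega) hkj,
    hord _ _ (by omega) hi hji⟩

lemma Avoids3412.of_lt_imp_lt {c : ℕ} {u v : Perm (Fin n)} (hu : Avoids3412 u)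
    (hv : FixesBelow c v) (hvc : ∀ i : Fin n, i.1 = c → (v i).1 ≤ c + 1)
    (hord : ∀ i k : Fin n, c < i.1 → c < k.1 → v i < v k → u i < u k) : Avoids3412 v := by
  rintro ⟨i, j, k, l, hij, hjk, hkl, hkl', hli, hij'⟩
  have hi := hv.lt_of_apply_lt hvc (hij.trans hjk) hkl (hkl'.trans hli) hli
  exact hu ⟨i, j, k, l, hij, hjk, hkl, hord _ _ (by omega) (by omega) hkl',
    hord _ _ (by omega) hi hli, hord _ _ hi (by omega) hij'⟩

lemma avoids_sRefl_mul_iff (t : {j : ℕ // j + 1 < n}) {u : Perm (Fin n)}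
    (hu : FixesBelow (t.1 + 1) u) :
    Avoids321 (sRefl t * u) ∧ Avoids3412 (sRefl t * u) ↔ Avoids321 u ∧ Avoids3412 u := by
  have hv := FixesBelow.sRefl_mul t hu
  have hvt : ∀ i : Fin n, i.1 = t.1 → ((sRefl t * u) i).1 ≤ t.1 + 1 := fun i hi => by
    rw [Perm.mul_apply, hu i (by omega), sRefl_apply_val, if_pos hi]
  have hut : ∀ i : Fin n, i.1 = t.1 → (u i).1 ≤ t.1 + 1 := fun i hi => by
    rw [hu i (by omega)]; omega
  have hord : ∀ i k : Fin n, t.1 < i.1 → t.1 < k.1 →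
      ((sRefl t * u) i < (sRefl t * u) k ↔ u i < u k) := fun i k hi hk => sRefl_lt_sRefl_iff t (hu.le_apply (k := i) hi) (hu.le_apply (k := k) hk)
  constructor
  · rintro ⟨h321, h3412⟩
    exact ⟨h321.of_lt_imp_lt (hu.mono t.1.le_succ) hut fun i k hi hk => (hord i k hi hk).2,
      h3412.of_lt_imp_lt (hu.mono t.1.le_succ) hut fun i k hi hk => (hord i k hi hk).2⟩
  · rintro ⟨h321, h3412⟩
    exact ⟨h321.of_lt_imp_lt hv hvt fun i k hi hk => (hord i k hi hk).1,
      h3412.of_lt_imp_lt hv hvt fun i k hi hk => (hord i k hi hk).1⟩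

lemma avoids_mul_sRefl_iff (t : {j : ℕ // j + 1 < n}) {u : Perm (Fin n)}
    (hu : FixesBelow (t.1 + 1) u) :
    Avoids321 (u * sRefl t) ∧ Avoids3412 (u * sRefl t) ↔ Avoids321 u ∧ Avoids3412 u := by
  rw [← avoids321_inv_iff, ← avoids3412_inv_iff, mul_inv_rev, sRefl_inv,
    avoids_sRefl_mul_iff t hu.inv, avoids321_inv_iff, avoids3412_inv_iff]

lemma FixesBelow.apply_eq_succ_or_apply_succ_eq {c : ℕ} {w : Perm (Fin n)}
    (hw : FixesBelow c w) (h321 : Avoids321 w) (h3412 : Avoids3412 w) (hc : c + 1 < n)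
    (hne : w ⟨c, by omega⟩ ≠ ⟨c, by omega⟩) :
    w ⟨c, by omega⟩ = ⟨c + 1, hc⟩ ∨ w ⟨c + 1, hc⟩ = ⟨c, by omega⟩ := by
  set x : Fin n := ⟨c, by omega⟩
  set y : Fin n := ⟨c + 1, hc⟩
  have hx : x.1 = c := rfl
  have hy : y.1 = c + 1 := rfl
  by_contra! ⟨hxy, hyx⟩
  replace hxy : (w x).1 ≠ c + 1 := fun h => hxy (Fin.ext h)
  replace hyx : (w y).1 ≠ c := fun h => hyx (Fin.ext h)
  have hxx : (w x).1 ≠ c := fun h => hne (Fin.ext h)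
  have hwx := hw.le_apply (k := x) hx.ge
  have hwy := hw.le_apply (k := y) (by omega)
  obtain ⟨p, hwp⟩ := w.surjective x
  obtain ⟨q, hwq⟩ := w.surjective y
  have hp : c + 1 < p.1 := by
    have := hw.inv.le_apply (k := x) hx.ge
    rw [← hwp, Perm.inv_def, symm_apply_apply] at this
    have hpx : p ≠ x := fun h => hxx (by rw [← h, hwp])
    have hpy : p ≠ y := fun h => hyx (by rw [← h, hwp])
    omega
  rcases lt_or_gt_of_ne (w.injective.ne (show x ≠ y from Fin.ne_of_val_ne (by omega)))
    with hlt | hgt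
  · have hq : c + 1 < q.1 := by
      have := hw.inv.le_apply (k := y) (by omega)
      rw [← hwq, Perm.inv_def, symm_apply_apply] at this
      have hqx : q ≠ x := fun h => hxy (by rw [← h, hwq])
      have hqy : q ≠ y := fun h => by rw [h] at hwq; rw [hwq] at hlt; omega
      omega
    rcases lt_or_gt_of_ne (show p ≠ q by rintro rfl; rw [hwp] at hwq; omega) with hpq | hqp
    · exact h3412 ⟨x, y, p, q, by omega, by omega, hpq, by rw [hwp, hwq]; omega,
        by rw [hwq]; omega, hlt⟩
    · exact h321 ⟨y, q, p, by omega, hqp, by rw [hwp, hwq]; omega, by rw [hwq]; omega⟩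
  · exact h321 ⟨x, y, p, by omega, by omega, by rw [hwp]; omega, hgt⟩

def BooleanPermFrom (c : ℕ) (w : Perm (Fin n)) : Prop :=
  ∃ js : List {j : ℕ // j + 1 < n},
    (js.map Subtype.val).Nodup ∧ (∀ j ∈ js, c ≤ j.1) ∧ w = (js.map sRefl).prod

lemma booleanPerm_iff_booleanPermFrom_zero {w : Perm (Fin n)} :
    BooleanPerm w ↔ BooleanPermFrom 0 w :=
  ⟨fun ⟨js, hnd, hw⟩ => ⟨js, hnd, fun j _ => j.1.zero_le, hw⟩,
    fun ⟨js, hnd, _, hw⟩ => ⟨js, hnd, hw⟩⟩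

namespace BooleanPermFrom

variable {c : ℕ} {w : Perm (Fin n)}

lemma fixesBelow (h : BooleanPermFrom c w) : FixesBelow c w := by
  obtain ⟨js, -, hjs, rfl⟩ := h
  exact fixesBelow_prod js hjs

lemma mono (h : BooleanPermFrom (c + 1) w) : BooleanPermFrom c w := by
  obtain ⟨js, hnd, hjs, rfl⟩ := h
  exact ⟨js, hnd, fun j hj => (hjs j hj).trans' c.le_succ, rfl⟩

lemma sRefl_mul (t : {j : ℕ // j + 1 < n}) (h : BooleanPermFrom (t.1 + 1) w) :
    BooleanPermFrom t.1 (sRefl t * w) := by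
  obtain ⟨js, hnd, hjs, rfl⟩ := h
  refine ⟨t :: js, ?_, ?_, by simp⟩
  · refine List.nodup_cons.2 ⟨fun ht => ?_, hnd⟩
    obtain ⟨j, hj, hjt⟩ := List.mem_map.1 ht
    have := hjs j hj
    omega
  · simp only [List.mem_cons, forall_eq_or_imp, le_refl, true_and]
    exact fun j hj => (hjs j hj).trans' t.1.le_succ

lemma mul_sRefl (t : {j : ℕ // j + 1 < n}) (h : BooleanPermFrom (t.1 + 1) w) :
    BooleanPermFrom t.1 (w * sRefl t) := by
  obtain ⟨js, hnd, hjs, rfl⟩ := h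
  refine ⟨js ++ [t], ?_, ?_, by simp⟩
  · simp only [List.map_append, List.map_cons, List.map_nil]
    refine hnd.append (List.nodup_singleton _) (List.disjoint_singleton.2 fun ht => ?_)
    obtain ⟨j, hj, hjt⟩ := List.mem_map.1 ht
    have := hjs j hj
    omega
  · simp only [List.mem_append, List.mem_singleton]
    rintro j (hj | rfl)
    · exact (hjs j hj).trans' t.1.le_succ
    · exact le_rfl

lemma eq_or_exists_sRefl_mul_or_mul_sRefl (h : BooleanPermFrom c w) :
    BooleanPermFrom (c + 1) w ∨ ∃ t : {j : ℕ // j + 1 < n}, t.1 = c ∧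
      ∃ u, BooleanPermFrom (c + 1) u ∧ (w = sRefl t * u ∨ w = u * sRefl t) := by
  obtain ⟨js, hnd, hjs, rfl⟩ := h
  by_cases hc : c ∈ js.map Subtype.val
  swap
  · refine .inl ⟨js, hnd, fun j hj => ?_, rfl⟩
    have := hjs j hj
    have : j.1 ≠ c := fun hjc => hc (List.mem_map.2 ⟨j, hj, hjc⟩)
    omega
  obtain ⟨t, ht, rfl⟩ := List.mem_map.1 hc
  obtain ⟨A, B, rfl⟩ := List.append_of_mem ht
  rw [List.map_append, List.map_cons, List.nodup_middle, List.nodup_cons, ← List.map_append]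
    at hnd
  obtain ⟨htAB, hAB⟩ := hnd
  have hge : ∀ j ∈ A ++ B, t.1 + 1 ≤ j.1 := fun j hj => by
    have := hjs j (by simp only [List.mem_append, List.mem_cons] at hj ⊢; tauto)
    have : j.1 ≠ t.1 := fun hjt => htAB (List.mem_map.2 ⟨j, hj, hjt⟩)
    omega
  have hside : (∀ a ∈ A, t.1 + 2 ≤ a.1) ∨ (∀ b ∈ B, t.1 + 2 ≤ b.1) := by
    by_contra! ⟨⟨a, ha, hat⟩, ⟨b, hb, hbt⟩⟩
    have := hge a (List.mem_append_left B ha)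
    have := hge b (List.mem_append_right A hb)
    rw [List.map_append, List.nodup_append] at hAB
    exact hAB.2.2 _ (List.mem_map_of_mem ha) _ (List.mem_map_of_mem hb) (by omega)
  have hcomm (l : List {j : ℕ // j + 1 < n}) (hl : ∀ j ∈ l, t.1 + 2 ≤ j.1) :
      Commute (sRefl t) (l.map sRefl).prod :=
    Commute.list_prod_right _ _ fun _ hs => by
      obtain ⟨j, hj, rfl⟩ := List.mem_map.1 hs
      exact sRefl_commute (hl j hj)
  refine .inr ⟨t, rfl, _, ⟨A ++ B, hAB, hge, rfl⟩, ?_⟩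
  simp only [List.map_append, List.map_cons, List.prod_append, List.prod_cons]
  rcases hside with hA | hB
  · exact .inl (by rw [← mul_assoc, ← (hcomm A hA).eq, mul_assoc])
  · exact .inr (by rw [(hcomm B hB).eq, mul_assoc])

end BooleanPermFrom

theorem BooleanPermFrom.avoids {c : ℕ} {w : Perm (Fin n)} (h : BooleanPermFrom c w) :
    Avoids321 w ∧ Avoids3412 w := by
  by_cases hc : n ≤ c
  · rw [h.fixesBelow.eq_one hc]
    exact ⟨avoids321_one, avoids3412_one⟩
  rcases h.eq_or_exists_sRefl_mul_or_mul_sRefl with h | ⟨t, rfl, u, hu, rfl | rfl⟩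
  · exact h.avoids
  · exact (avoids_sRefl_mul_iff t hu.fixesBelow).2 hu.avoids
  · exact (avoids_mul_sRefl_iff t hu.fixesBelow).2 hu.avoids
termination_by n - c

theorem BooleanPermFrom.of_avoids {c : ℕ} {w : Perm (Fin n)} (hw : FixesBelow c w)
    (h321 : Avoids321 w) (h3412 : Avoids3412 w) : BooleanPermFrom c w := by
  by_cases hc : n ≤ c
  · exact ⟨[], List.nodup_nil, by simp, hw.eq_one hc⟩
  by_cases hfix : w ⟨c, by omega⟩ = ⟨c, by omega⟩
  · exact (of_avoids (hw.succ (by omega) hfix) h321 h3412).mono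
  have hc1 : c + 1 < n := by
    have := hw.le_apply (k := ⟨c, by omega⟩) le_rfl
    have : (w ⟨c, by omega⟩).1 ≠ c := fun h => hfix (Fin.ext h)
    omega
  set t : {j : ℕ // j + 1 < n} := ⟨c, hc1⟩
  rcases hw.apply_eq_succ_or_apply_succ_eq h321 h3412 hc1 hfix with h | h
  · have hu := hw.sRefl_mul_of_apply_eq t h
    have hwu : w = sRefl t * (sRefl t * w) := by rw [← mul_assoc, sRefl_mul_self, one_mul]
    rw [hwu] at h321 h3412 ⊢
    obtain ⟨hu321, hu3412⟩ := (avoids_sRefl_mul_iff t hu).1 ⟨h321, h3412⟩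
    exact (of_avoids hu hu321 hu3412).sRefl_mul t
  · have hu := hw.mul_sRefl_of_apply_eq t h
    have hwu : w = w * sRefl t * sRefl t := by rw [mul_assoc, sRefl_mul_self, mul_one]
    rw [hwu] at h321 h3412 ⊢
    obtain ⟨hu321, hu3412⟩ := (avoids_mul_sRefl_iff t hu).1 ⟨h321, h3412⟩
    exact (of_avoids hu hu321 hu3412).mul_sRefl t
termination_by n - c

end BooleanPatterns

/-- `w` is a product of distinct simple reflections iff it avoids `(321)` and `(3412)`. -/
theorem stmt14 (n : ℕ) (w : Equiv.Perm (Fin n)) :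
    BooleanPerm w ↔ Avoids321 w ∧ Avoids3412 w := by
  rw [booleanPerm_iff_booleanPermFrom_zero]
  exact ⟨BooleanPermFrom.avoids, fun ⟨h321, h3412⟩ =>
    BooleanPermFrom.of_avoids (fun _ hi => absurd hi (Nat.not_lt_zero _)) h321 h3412⟩
end

section
/- The number of Boolean permutations in S_n (permutations expressible as products of distinct simple reflections) equals the Fibonacci number F_{2n-1}, where F_1 = F_2 = 1. -/
/-!
Write `B_a` for the set of products of distinct simple reflections `s_j` with `j < a`; its
elements fix every point above `a`. In a product of distinct reflections from `B_{a+1}` that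
involves `s_a`, the reflection `s_{a-1}` occurs on at most one side of `s_a`, and `s_a` commutes
with the other side. Hence every `w ∈ B_{a+1}` is `u`, `s_a u` or `u s_a` with `u ∈ B_a`, and the
value `w (a+1)` tells which: it is `a + 1`, `a`, or something else. The last form is new only when
`u` moves `a` (otherwise `u` commutes with `s_a`). So with `b_a = #B_a` and `d_a` the number of
`u ∈ B_a` moving `a`, we get `b_{a+1} = b_a + (b_a + d_a)` and `d_{a+1} = b_a + d_a`, which is the
recursion of `(F_{2a+1}, F_{2a})`.
-/

open Equiv

def booleanPermsBelow (n a : ℕ) : Set (Perm (Fin n)) :=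
  {w | ∃ js : List {j : ℕ // j + 1 < n},
    (js.map Subtype.val).Nodup ∧ (∀ j ∈ js, j.1 < a) ∧ (js.map sRefl).prod = w}

section

variable {n a : ℕ}

lemma sRefl_apply_of_lt {j : {j : ℕ // j + 1 < n}} {x : Fin n} (hx : j.1 + 1 < x.1) :
    sRefl j x = x :=
  swap_apply_of_ne_of_ne (Fin.ne_of_val_ne (by simp; omega)) (Fin.ne_of_val_ne (by simp; omega))

lemma prod_sRefl_apply_of_lt {js : List {j : ℕ // j + 1 < n}} {x : Fin n}
    (hjs : ∀ j ∈ js, j.1 + 1 < x.1) : (js.map sRefl).prod x = x := by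
  induction js with
  | nil => rfl
  | cons j js ih =>
    rw [List.map_cons, List.prod_cons, Perm.mul_apply,
      ih fun k hk => hjs k (List.mem_cons_of_mem _ hk),
      sRefl_apply_of_lt (hjs j List.mem_cons_self)]

lemma commute_sRefl_of_apply {j : {j : ℕ // j + 1 < n}} {u : Perm (Fin n)}
    (h₀ : u ⟨j, by omega⟩ = ⟨j, by omega⟩) (h₁ : u ⟨j + 1, j.2⟩ = ⟨j + 1, j.2⟩) :
    Commute (sRefl j) u := by
  rw [Commute, SemiconjBy, sRefl, mul_swap_eq_swap_mul, h₀, h₁]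

lemma commute_sRefl_prod {j : {j : ℕ // j + 1 < n}} {js : List {j : ℕ // j + 1 < n}}
    (hjs : ∀ k ∈ js, k.1 + 1 < j.1) : Commute (sRefl j) (js.map sRefl).prod :=
  commute_sRefl_of_apply (prod_sRefl_apply_of_lt hjs)
    (prod_sRefl_apply_of_lt fun k hk => (hjs k hk).trans (Nat.lt_succ_self _))

lemma apply_eq_self_of_mem_booleanPermsBelow {u : Perm (Fin n)}
    (hu : u ∈ booleanPermsBelow n a) {x : Fin n} (hx : a < x.1) : u x = x := by
  obtain ⟨js, -, hjs, rfl⟩ := hu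
  exact prod_sRefl_apply_of_lt fun j hj => by have := hjs j hj; omega

lemma booleanPermsBelow_zero : booleanPermsBelow n 0 = {1} := by
  ext w
  constructor
  · rintro ⟨_ | ⟨j, js⟩, -, hjs, rfl⟩
    · rfl
    · exact absurd (hjs j List.mem_cons_self) (Nat.not_lt_zero _)
  · rintro rfl
    exact ⟨[], List.nodup_nil, by simp, rfl⟩

lemma booleanPermsBelow_mono {b : ℕ} (hab : a ≤ b) :
    booleanPermsBelow n a ⊆ booleanPermsBelow n b := by
  rintro _ ⟨js, hnd, hjs, rfl⟩
  exact ⟨js, hnd, fun j hj => (hjs j hj).trans_le hab, rfl⟩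

lemma sRefl_mul_mem_booleanPermsBelow (ha : a + 1 < n) {u : Perm (Fin n)}
    (hu : u ∈ booleanPermsBelow n a) : sRefl ⟨a, ha⟩ * u ∈ booleanPermsBelow n (a + 1) := by
  obtain ⟨js, hnd, hjs, rfl⟩ := hu
  refine ⟨⟨a, ha⟩ :: js, ?_, ?_, rfl⟩
  · refine List.nodup_cons.2 ⟨fun h => ?_, hnd⟩
    obtain ⟨k, hk, hka⟩ := List.mem_map.1 h
    exact (hjs k hk).ne hka
  · intro k hk
    rcases List.mem_cons.1 hk with rfl | hk
    · exact Nat.lt_succ_self _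
    · exact (hjs k hk).trans (Nat.lt_succ_self _)

lemma mul_sRefl_mem_booleanPermsBelow (ha : a + 1 < n) {u : Perm (Fin n)}
    (hu : u ∈ booleanPermsBelow n a) : u * sRefl ⟨a, ha⟩ ∈ booleanPermsBelow n (a + 1) := by
  obtain ⟨js, hnd, hjs, rfl⟩ := hu
  refine ⟨js ++ [⟨a, ha⟩], ?_, ?_, by simp⟩
  · rw [List.map_append, List.nodup_append]
    refine ⟨hnd, List.nodup_singleton _, ?_⟩
    simp only [List.mem_map, List.map_cons, List.map_nil, List.mem_singleton]
    rintro _ ⟨k, hk, rfl⟩ _ rfl h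
    exact (hjs k hk).ne h
  · intro k hk
    rcases List.mem_append.1 hk with hk | hk
    · exact (hjs k hk).trans (Nat.lt_succ_self _)
    · rw [List.mem_singleton.1 hk]
      exact Nat.lt_succ_self _

lemma forall_add_one_lt_or_forall_add_one_lt {l₁ l₂ : List {j : ℕ // j + 1 < n}}
    (hnd : ((l₁ ++ l₂).map Subtype.val).Nodup) (hlt : ∀ k ∈ l₁ ++ l₂, k.1 < a) :
    (∀ k ∈ l₁, k.1 + 1 < a) ∨ ∀ k ∈ l₂, k.1 + 1 < a := by
  by_contra! h
  obtain ⟨⟨k₁, hk₁, ha₁⟩, ⟨k₂, hk₂, ha₂⟩⟩ := h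
  have hne : k₁.1 ≠ k₂.1 := (List.nodup_append.1 (List.map_append .. ▸ hnd)).2.2 _
    (List.mem_map_of_mem hk₁) _ (List.mem_map_of_mem hk₂)
  have := hlt k₁ (List.mem_append_left _ hk₁)
  have := hlt k₂ (List.mem_append_right _ hk₂)
  omega

lemma mem_booleanPermsBelow_succ (ha : a + 1 < n) {w : Perm (Fin n)}
    (hw : w ∈ booleanPermsBelow n (a + 1)) :
    w ∈ booleanPermsBelow n a ∨ (∃ u ∈ booleanPermsBelow n a, sRefl ⟨a, ha⟩ * u = w) ∨
      ∃ u ∈ booleanPermsBelow n a, u ⟨a, by omega⟩ ≠ ⟨a, by omega⟩ ∧ u * sRefl ⟨a, ha⟩ = w := by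
  obtain ⟨js, hnd, hjs, rfl⟩ := hw
  set j : {j : ℕ // j + 1 < n} := ⟨a, ha⟩
  by_cases hj : j ∈ js
  swap
  · refine Or.inl ⟨js, hnd, fun k hk => lt_of_le_of_ne (Nat.lt_succ_iff.1 (hjs k hk)) ?_, rfl⟩
    exact fun hka => hj (Subtype.ext (a2 := j) hka ▸ hk)
  obtain ⟨l₁, l₂, rfl⟩ := List.append_of_mem hj
  have hnd' : a ∉ (l₁ ++ l₂).map Subtype.val ∧ ((l₁ ++ l₂).map Subtype.val).Nodup := by
    rw [← List.nodup_cons, ← List.map_cons (f := Subtype.val) (a := j),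
      ← (List.perm_middle.map _).nodup_iff]
    exact hnd
  have hbelow : ∀ k ∈ l₁ ++ l₂, k.1 < a := fun k hk =>
    lt_of_le_of_ne
      (Nat.lt_succ_iff.1 (hjs k (List.mem_append.2 ((List.mem_append.1 hk).imp id
        (List.mem_cons_of_mem _)))))
      fun h => hnd'.1 (List.mem_map.2 ⟨k, hk, h⟩)
  set u := ((l₁ ++ l₂).map sRefl).prod
  have hu : u ∈ booleanPermsBelow n a := ⟨_, hnd'.2, hbelow, rfl⟩
  have hw : ((l₁ ++ j :: l₂).map sRefl).prod =
      (l₁.map sRefl).prod * sRefl j * (l₂.map sRefl).prod := by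
    simp [mul_assoc]
  have hu' : u = (l₁.map sRefl).prod * (l₂.map sRefl).prod := by simp [u]
  rcases forall_add_one_lt_or_forall_add_one_lt hnd'.2 hbelow with h₁ | h₂
  · refine Or.inr (Or.inl ⟨u, hu, ?_⟩)
    rw [hw, hu', ← mul_assoc, (commute_sRefl_prod h₁).eq]
  · have hw' : ((l₁ ++ j :: l₂).map sRefl).prod = u * sRefl j := by
      rw [hw, mul_assoc, (commute_sRefl_prod h₂).eq, ← mul_assoc, hu']
    rw [hw']
    by_cases hup : u ⟨a, by omega⟩ = ⟨a, by omega⟩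
    · refine Or.inr (Or.inl ⟨u, hu, commute_sRefl_of_apply hup ?_⟩)
      exact apply_eq_self_of_mem_booleanPermsBelow hu (Nat.lt_succ_self _)
    · exact Or.inr (Or.inr ⟨u, hu, hup, rfl⟩)

lemma sRefl_mul_apply_succ (ha : a + 1 < n) {u : Perm (Fin n)} (hu : u ∈ booleanPermsBelow n a) :
    (sRefl ⟨a, ha⟩ * u) ⟨a + 1, ha⟩ = ⟨a, by omega⟩ := by
  rw [Perm.mul_apply, apply_eq_self_of_mem_booleanPermsBelow hu (Nat.lt_succ_self a)]
  exact swap_apply_right _ _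

lemma mul_sRefl_apply_succ (ha : a + 1 < n) {u : Perm (Fin n)} (hu : u ∈ booleanPermsBelow n a)
    (hup : u ⟨a, by omega⟩ ≠ ⟨a, by omega⟩) :
    (u * sRefl ⟨a, ha⟩) ⟨a + 1, ha⟩ ≠ ⟨a, by omega⟩ ∧
      (u * sRefl ⟨a, ha⟩) ⟨a + 1, ha⟩ ≠ ⟨a + 1, ha⟩ := by
  rw [Perm.mul_apply, sRefl, swap_apply_right]
  refine ⟨hup, fun h => ?_⟩
  have hpq := u.injective
    (h.trans (apply_eq_self_of_mem_booleanPermsBelow hu (Nat.lt_succ_self a)).symm)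
  exact absurd (congrArg Fin.val hpq) (Nat.succ_ne_self a).symm

lemma booleanPermsBelow_succ_inter_fixed (ha : a + 1 < n) :
    booleanPermsBelow n (a + 1) ∩ {w | w ⟨a + 1, ha⟩ = ⟨a + 1, ha⟩} = booleanPermsBelow n a := by
  ext w
  refine ⟨fun ⟨hw, hwq⟩ => ?_, fun hw => ⟨booleanPermsBelow_mono a.le_succ hw,
    apply_eq_self_of_mem_booleanPermsBelow hw (Nat.lt_succ_self a)⟩⟩
  rcases mem_booleanPermsBelow_succ ha hw with hw | ⟨u, hu, rfl⟩ | ⟨u, hu, hup, rfl⟩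
  · exact hw
  · exact absurd ((sRefl_mul_apply_succ ha hu).symm.trans hwq)
      (Fin.ne_of_val_ne (Nat.succ_ne_self a).symm)
  · exact absurd hwq (mul_sRefl_apply_succ ha hu hup).2

lemma booleanPermsBelow_succ_diff_fixed (ha : a + 1 < n) :
    booleanPermsBelow n (a + 1) \ {w | w ⟨a + 1, ha⟩ = ⟨a + 1, ha⟩} =
      (sRefl ⟨a, ha⟩ * ·) '' booleanPermsBelow n a ∪
        (· * sRefl ⟨a, ha⟩) '' {u ∈ booleanPermsBelow n a | u ⟨a, by omega⟩ ≠ ⟨a, by omega⟩} := by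
  ext w
  constructor
  · rintro ⟨hw, hwq⟩
    rcases mem_booleanPermsBelow_succ ha hw with hw | ⟨u, hu, rfl⟩ | ⟨u, hu, hup, rfl⟩
    · exact absurd (apply_eq_self_of_mem_booleanPermsBelow hw (Nat.lt_succ_self a)) hwq
    · exact Or.inl ⟨u, hu, rfl⟩
    · exact Or.inr ⟨u, ⟨hu, hup⟩, rfl⟩
  · rintro (⟨u, hu, rfl⟩ | ⟨u, ⟨hu, hup⟩, rfl⟩)
    · refine ⟨sRefl_mul_mem_booleanPermsBelow ha hu, fun h => ?_⟩
      exact Fin.ne_of_val_ne (Nat.succ_ne_self a).symm ((sRefl_mul_apply_succ ha hu).symm.trans h)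
    · exact ⟨mul_sRefl_mem_booleanPermsBelow ha hu, (mul_sRefl_apply_succ ha hu hup).2⟩

lemma ncard_booleanPermsBelow_succ_diff_fixed (ha : a + 1 < n) :
    (booleanPermsBelow n (a + 1) \ {w | w ⟨a + 1, ha⟩ = ⟨a + 1, ha⟩}).ncard =
      (booleanPermsBelow n a).ncard +
        {u ∈ booleanPermsBelow n a | u ⟨a, by omega⟩ ≠ ⟨a, by omega⟩}.ncard := by
  have hdisj : Disjoint ((sRefl ⟨a, ha⟩ * ·) '' booleanPermsBelow n a)
      ((· * sRefl ⟨a, ha⟩) '' {u ∈ booleanPermsBelow n a | u ⟨a, by omega⟩ ≠ ⟨a, by omega⟩}) := by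
    refine Set.disjoint_left.2 ?_
    rintro _ ⟨u, hu, rfl⟩ ⟨v, ⟨hv, hvp⟩, h : v * sRefl ⟨a, ha⟩ = sRefl ⟨a, ha⟩ * u⟩
    exact (mul_sRefl_apply_succ ha hv hvp).1 (by rw [h]; exact sRefl_mul_apply_succ ha hu)
  rw [booleanPermsBelow_succ_diff_fixed ha, Set.ncard_union_eq hdisj,
    Set.ncard_image_of_injective _ (mul_right_injective _),
    Set.ncard_image_of_injective _ (mul_left_injective _)]

end

theorem ncard_booleanPermsBelow {n a : ℕ} (ha : a < n) :
    (booleanPermsBelow n a).ncard = Nat.fib (2 * a + 1) ∧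
      {w ∈ booleanPermsBelow n a | w ⟨a, ha⟩ ≠ ⟨a, ha⟩}.ncard = Nat.fib (2 * a) := by
  induction a with
  | zero =>
    simp only [booleanPermsBelow_zero, Set.mem_singleton_iff]
    refine ⟨Set.ncard_singleton 1, ?_⟩
    rw [Nat.mul_zero, Nat.fib_zero, Set.ncard_eq_zero]
    exact Set.eq_empty_of_forall_notMem fun w ⟨hw, hw0⟩ => hw0 (by rw [hw]; rfl)
  | succ a ih =>
    obtain ⟨hB, hD⟩ := ih (by omega)
    have hmoved := ncard_booleanPermsBelow_succ_diff_fixed ha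
    rw [hB, hD] at hmoved
    have hfib₁ : Nat.fib (2 * (a + 1)) = Nat.fib (2 * a) + Nat.fib (2 * a + 1) := Nat.fib_add_two
    have hfib₂ : Nat.fib (2 * (a + 1) + 1) = Nat.fib (2 * a + 1) + Nat.fib (2 * (a + 1)) :=
      Nat.fib_add_two
    refine ⟨?_, hmoved.trans (by omega)⟩
    rw [← Set.ncard_inter_add_ncard_sdiff_eq_ncard _ {w | w ⟨a + 1, ha⟩ = ⟨a + 1, ha⟩},
      booleanPermsBelow_succ_inter_fixed ha, hmoved, hB]
    omega

theorem setOf_booleanPerm_eq (n : ℕ) :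
    {w : Perm (Fin n) | BooleanPerm w} = booleanPermsBelow n (n - 1) := by
  ext w
  exact ⟨fun ⟨js, hnd, hw⟩ => ⟨js, hnd, fun j _ => by have := j.2; omega, hw.symm⟩,
    fun ⟨js, hnd, _, hw⟩ => ⟨js, hnd, hw.symm⟩⟩

/-- The number of Boolean permutations in `S_n` is the Fibonacci number `F_{2n-1}`. -/
theorem stmt15 (n : ℕ) (hn : 1 ≤ n) :
    Nat.card {w : Equiv.Perm (Fin n) // BooleanPerm w} = Nat.fib (2 * n - 1) := by
  calc Nat.card {w : Equiv.Perm (Fin n) // BooleanPerm w}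
      = (booleanPermsBelow n (n - 1)).ncard := by
        rw [← setOf_booleanPerm_eq, ← Nat.card_coe_set_eq]
        rfl
    _ = Nat.fib (2 * (n - 1) + 1) := (ncard_booleanPermsBelow (by omega)).1
    _ = Nat.fib (2 * n - 1) := by
        congr 1
        omega
end
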